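/- Let G be an infinite countable locally finite group (G is the union of a strictly increasing sequence of finite subgroups) and let F : [0,∞) → [0,∞) be a continuous nondecreasing function with F(t)/t → 0 and F(t) → ∞ as t → ∞. Then there exists a symmetric strictly positive probability density μ : G → (0,∞) (Σ_x μ(x) = 1 and μ(x⁻¹) = μ(x)) such that −log( μ^{*n}(e) ) / F(n) → 0 as n → ∞. -/

import Mathlib

/-
Write `u_k` for the uniform density on `H_k`. Since the `H_k` increase, `u_i * u_j = u_(max i j)`,
so every convolution power `w^{*n}` of `w = ∑_{j ≤ k} c_j u_j` (with `c_j ≥ 0`) is again a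
nonnegative combination of `u_0, …, u_k`, of total weight `(∑_{j ≤ k} c_j)^n`; as
`u_j(e) ≥ 1/|H_k|` for `j ≤ k`, this gives `μ^{*n}(e) ≥ (1 - t_k)^n / |H_k|` for the mixture
`μ = ∑ c_k u_k` with tails `t_k = ∑_{j > k} c_j`. Pick times `q_k` with
`F ≥ 2(k+1)(log |H_k| + 1)` on `[q_k, ∞)` and tails `t_k ≤ (log |H_k| + 1) / (2 q_{k+1})`; then
`-log μ^{*n}(e) ≤ 2 n t_k + log |H_k| ≤ F(n)/(k+1)` for `q_k ≤ n < q_{k+1}`.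
-/

open Filter
open scoped BigOperators Classical

/-- Convolution of two real-valued functions on a group:
`(f * g)(x) = ∑_y f(y) g(y⁻¹ x)`. -/
noncomputable def gconv {G : Type*} [Group G] (f g : G → ℝ) : G → ℝ :=
  fun x => ∑' y : G, f y * g (y⁻¹ * x)

/-- `n`-fold convolution power, with `f^{*0} = δ_e` and `f^{*(n+1)} = f * f^{*n}`
(so `f^{*1} = f`). -/
noncomputable def gconvPow {G : Type*} [Group G] (f : G → ℝ) : ℕ → G → ℝ
  | 0 => fun x => if x = 1 then 1 else 0
  | n + 1 => gconv f (gconvPow f n)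

open Function

section

variable {G : Type*} [Group G]

section Convolution

lemma gconv_sum_left {ι : Type*} (s : Finset ι) (a : ι → ℝ) {g : ι → G → ℝ}
    (hg : ∀ i, (g i).HasFiniteSupport) (h : G → ℝ) :
    gconv (∑ i ∈ s, a i • g i) h = ∑ i ∈ s, a i • gconv (g i) h := by
  funext x
  simp only [gconv, Finset.sum_apply, Pi.smul_apply, smul_eq_mul, Finset.sum_mul, mul_assoc]
  rw [Summable.tsum_finsetSum fun i _ => summable_of_hasFiniteSupport ?_]
  · simp only [tsum_mul_left]
  · exact ((hg i).mul_left _).mul_right _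

lemma gconv_sum_right {ι : Type*} (s : Finset ι) (a : ι → ℝ) (g : ι → G → ℝ) {f : G → ℝ}
    (hf : f.HasFiniteSupport) :
    gconv f (∑ i ∈ s, a i • g i) = ∑ i ∈ s, a i • gconv f (g i) := by
  funext x
  simp only [gconv, Finset.sum_apply, Pi.smul_apply, smul_eq_mul, Finset.mul_sum]
  rw [Summable.tsum_finsetSum fun i _ => summable_of_hasFiniteSupport ?_]
  · simp only [mul_left_comm _ (a _), tsum_mul_left]
  · exact hf.mul_left _

lemma gconv_inv_apply_inv (f g : G → ℝ) (x : G) :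
    gconv (fun y => g y⁻¹) (fun y => f y⁻¹) x⁻¹ = gconv f g x := by
  rw [gconv, ← (Equiv.mulLeft x⁻¹).tsum_eq]
  simp only [gconv, Equiv.coe_mulLeft, mul_inv_rev, inv_inv, mul_inv_cancel_left,
    mul_comm (g _)]

lemma gconvPow_one (f : G → ℝ) : gconvPow f 1 = f := by
  funext x
  rw [gconvPow, gconv, tsum_eq_single x fun y hy => by simp [gconvPow, inv_mul_eq_one, hy]]
  simp [gconvPow]

lemma gconvPow_nonneg {f : G → ℝ} (hf : 0 ≤ f) : ∀ n, 0 ≤ gconvPow f n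
  | 0 => fun x => by by_cases hx : x = 1 <;> simp [gconvPow, hx]
  | n + 1 => fun _ => tsum_nonneg fun y => mul_nonneg (hf y) (gconvPow_nonneg hf n _)

lemma summable_mul_apply_inv_mul {f P : G → ℝ} (hf0 : 0 ≤ f) (hf : Summable f) (hP0 : 0 ≤ P)
    (hP1 : P ≤ 1) (x : G) : Summable fun y => f y * P (y⁻¹ * x) :=
  hf.of_nonneg_of_le (fun y => mul_nonneg (hf0 y) (hP0 _))
    fun y => mul_le_of_le_one_right (hf0 y) (hP1 _)

lemma gconvPow_le_one {f : G → ℝ} (hf0 : 0 ≤ f) (hf : Summable f) (hf1 : ∑' x, f x ≤ 1) :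
    ∀ n, gconvPow f n ≤ 1
  | 0 => fun x => by by_cases hx : x = 1 <;> simp [gconvPow, hx]
  | n + 1 => fun x => by
    have ih := gconvPow_le_one hf0 hf hf1 n
    refine le_trans (Summable.tsum_le_tsum (fun y => ?_) ?_ hf) hf1
    · exact mul_le_of_le_one_right (hf0 y) (ih _)
    · exact summable_mul_apply_inv_mul hf0 hf (gconvPow_nonneg hf0 n) ih x

lemma gconvPow_mono {f g : G → ℝ} (hg0 : 0 ≤ g) (hgf : g ≤ f) (hf : Summable f)
    (hf1 : ∑' x, f x ≤ 1) : ∀ n, gconvPow g n ≤ gconvPow f n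
  | 0 => le_rfl
  | n + 1 => fun x => by
    have hg : Summable g := hf.of_nonneg_of_le hg0 hgf
    have hg1 : ∑' x, g x ≤ 1 := (hg.tsum_le_tsum hgf hf).trans hf1
    have hf0 : 0 ≤ f := hg0.trans hgf
    refine Summable.tsum_le_tsum (fun y => ?_) ?_ ?_
    · exact mul_le_mul (hgf y) (gconvPow_mono hg0 hgf hf hf1 n _) (gconvPow_nonneg hg0 n _)
        (hf0 y)
    · exact summable_mul_apply_inv_mul hg0 hg (gconvPow_nonneg hg0 n)
        (gconvPow_le_one hg0 hg hg1 n) x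
    · exact summable_mul_apply_inv_mul hf0 hf (gconvPow_nonneg hf0 n)
        (gconvPow_le_one hf0 hf hf1 n) x

end Convolution

section UniformDensity

noncomputable def uniformDensity (K : Subgroup G) : G → ℝ :=
  (K : Set G).indicator fun _ => (Nat.card K : ℝ)⁻¹

variable {K L : Subgroup G}

lemma uniformDensity_nonneg : 0 ≤ uniformDensity K :=
  Set.indicator_nonneg fun _ _ => by positivity

lemma uniformDensity_le_one : uniformDensity K ≤ 1 :=
  Set.indicator_le' (fun _ _ => Nat.cast_inv_le_one _) fun _ _ => zero_le_one

lemma uniformDensity_of_mem {x : G} (hx : x ∈ K) :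
    uniformDensity K x = (Nat.card K : ℝ)⁻¹ :=
  Set.indicator_of_mem hx _

lemma uniformDensity_pos [Finite K] {x : G} (hx : x ∈ K) : 0 < uniformDensity K x := by
  rw [uniformDensity_of_mem hx]
  have := Nat.card_pos (α := K)
  positivity

lemma uniformDensity_mul_left {x y : G} (hy : y ∈ K) :
    uniformDensity K (y * x) = uniformDensity K x := by
  simp only [uniformDensity, Set.indicator_apply, SetLike.mem_coe, K.mul_mem_cancel_left hy]

lemma uniformDensity_inv (x : G) : uniformDensity K x⁻¹ = uniformDensity K x := by
  simp only [uniformDensity, Set.indicator_apply, SetLike.mem_coe, inv_mem_iff]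

lemma hasFiniteSupport_uniformDensity [Finite K] : (uniformDensity K).HasFiniteSupport :=
  (Set.toFinite (K : Set G)).subset (Set.support_indicator_subset)

lemma hasSum_uniformDensity [Finite K] : HasSum (uniformDensity K) 1 := by
  refine (summable_of_hasFiniteSupport hasFiniteSupport_uniformDensity).hasSum_iff.2 ?_
  rw [uniformDensity, ← tsum_subtype, tsum_const, nsmul_eq_mul]
  exact mul_inv_cancel₀ (Nat.cast_ne_zero.2 Nat.card_pos.ne')

lemma gconv_uniformDensity_of_le [Finite K] (hKL : K ≤ L) :
    gconv (uniformDensity K) (uniformDensity L) = uniformDensity L := by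
  funext x
  have hK : (fun y => uniformDensity K y * uniformDensity L (y⁻¹ * x)) =
      (K : Set G).indicator fun y => (Nat.card K : ℝ)⁻¹ * uniformDensity L (y⁻¹ * x) :=
    funext fun _ => by rw [Set.indicator_mul_left]; rfl
  have hL (y : (K : Set G)) : uniformDensity L ((y : G)⁻¹ * x) = uniformDensity L x :=
    uniformDensity_mul_left (L.inv_mem (hKL y.2))
  rw [gconv, hK, ← tsum_subtype]
  simp only [hL, tsum_const, nsmul_eq_mul, ← mul_assoc, SetLike.coe_sort_coe]
  rw [mul_inv_cancel₀ (Nat.cast_ne_zero.2 Nat.card_pos.ne'), one_mul]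

lemma gconv_uniformDensity_of_ge [Finite K] (hKL : K ≤ L) :
    gconv (uniformDensity L) (uniformDensity K) = uniformDensity L := by
  funext x
  rw [← gconv_inv_apply_inv, ← inv_inv x]
  simp only [uniformDensity_inv, inv_inv, gconv_uniformDensity_of_le hKL]

lemma gconv_uniformDensity_max {H : ℕ → Subgroup G} (hH : Monotone H) [∀ k, Finite (H k)]
    (i j : ℕ) :
    gconv (uniformDensity (H i)) (uniformDensity (H j)) = uniformDensity (H (max i j)) := by
  rcases le_total i j with h | h
  · rw [max_eq_right h, gconv_uniformDensity_of_le (hH h)]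
  · rw [max_eq_left h, gconv_uniformDensity_of_ge (hH h)]

end UniformDensity

section MaxIdempotents

lemma exists_gconvPow_succ_eq_sum {u : ℕ → G → ℝ} (hu : ∀ i, (u i).HasFiniteSupport)
    (hmul : ∀ i j, gconv (u i) (u j) = u (max i j)) (S : Finset ℕ) {c : ℕ → ℝ}
    (hc : ∀ j ∈ S, 0 ≤ c j) (n : ℕ) :
    ∃ (ι : Type) (T : Finset ι) (a : ι → ℝ) (σ : ι → ℕ), (∀ i ∈ T, 0 ≤ a i ∧ σ i ∈ S) ∧
      ∑ i ∈ T, a i = (∑ j ∈ S, c j) ^ (n + 1) ∧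
      gconvPow (∑ j ∈ S, c j • u j) (n + 1) = ∑ i ∈ T, a i • u (σ i) := by
  induction n with
  | zero => exact ⟨ℕ, S, c, id, fun j hj => ⟨hc j hj, hj⟩, (pow_one _).symm, gconvPow_one _⟩
  | succ n ih =>
    obtain ⟨ι, T, a, σ, haσ, hsum, hpow⟩ := ih
    refine ⟨ℕ × ι, S ×ˢ T, fun p => c p.1 * a p.2, fun p => max p.1 (σ p.2), ?_, ?_, ?_⟩
    · simp only [Finset.mem_product]
      rintro ⟨j, i⟩ ⟨hj, hi⟩
      refine ⟨mul_nonneg (hc j hj) (haσ i hi).1, ?_⟩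
      rcases max_choice j (σ i) with h | h <;> rw [h]
      exacts [hj, (haσ i hi).2]
    · rw [Finset.sum_product, ← Finset.sum_mul_sum, hsum, pow_succ' _ (n + 1)]
    · have hw : (∑ j ∈ S, c j • u j).HasFiniteSupport := by
        rw [Finset.sum_fn]
        fun_prop
      rw [gconvPow, hpow, gconv_sum_right _ _ _ hw]
      simp only [gconv_sum_left _ _ hu, hmul, Finset.sum_product, Finset.smul_sum, smul_smul]
      rw [Finset.sum_comm]
      simp only [mul_comm]

lemma sum_pow_div_card_le_gconvPow {H : ℕ → Subgroup G} (hH : Monotone H)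
    [∀ k, Finite (H k)] {c : ℕ → ℝ} (hc : 0 ≤ c) (k n : ℕ) :
    (∑ j ∈ Finset.range (k + 1), c j) ^ n / Nat.card (H k) ≤
      gconvPow (∑ j ∈ Finset.range (k + 1), c j • uniformDensity (H j)) n 1 := by
  have hN : (1 : ℝ) ≤ Nat.card (H k) := Nat.one_le_cast.2 Nat.card_pos
  cases n with
  | zero => simpa [gconvPow] using inv_le_one_of_one_le₀ hN
  | succ n =>
    obtain ⟨ι, T, a, σ, haσ, hsum, hpow⟩ := exists_gconvPow_succ_eq_sum
      (fun _ => hasFiniteSupport_uniformDensity) (gconv_uniformDensity_max hH) _ (fun j _ => hc j) n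
    rw [hpow, ← hsum, Finset.sum_div, Finset.sum_apply]
    refine Finset.sum_le_sum fun i hi => ?_
    have hσ : σ i ≤ k := Nat.lt_succ_iff.1 (Finset.mem_range.1 (haσ i hi).2)
    rw [Pi.smul_apply, smul_eq_mul, uniformDensity_of_mem (H (σ i)).one_mem, div_eq_mul_inv]
    refine mul_le_mul_of_nonneg_left (inv_anti₀ (Nat.cast_pos.2 Nat.card_pos) ?_) (haσ i hi).1
    exact Nat.cast_le.2 (Subgroup.card_le_of_le (hH hσ))

end MaxIdempotents

section Mixture

noncomputable def uniformMixture (c : ℕ → ℝ) (H : ℕ → Subgroup G) : G → ℝ :=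
  fun x => ∑' k, c k * uniformDensity (H k) x

variable {c : ℕ → ℝ} {H : ℕ → Subgroup G}

lemma summable_mul_uniformDensity (hc0 : 0 ≤ c) (hc : Summable c) (x : G) :
    Summable fun k => c k * uniformDensity (H k) x :=
  hc.of_nonneg_of_le (fun k => mul_nonneg (hc0 k) (uniformDensity_nonneg x))
    fun k => mul_le_of_le_one_right (hc0 k) (uniformDensity_le_one x)

lemma uniformMixture_nonneg (hc0 : 0 ≤ c) : 0 ≤ uniformMixture c H :=
  fun _ => tsum_nonneg fun k => mul_nonneg (hc0 k) (uniformDensity_nonneg _)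

lemma uniformMixture_pos [∀ k, Finite (H k)] (hc0 : ∀ k, 0 < c k) (hc : Summable c) {x : G}
    {k : ℕ} (hx : x ∈ H k) : 0 < uniformMixture c H x :=
  (summable_mul_uniformDensity (fun k => (hc0 k).le) hc x).tsum_pos
    (fun k => mul_nonneg (hc0 k).le (uniformDensity_nonneg x)) k
    (mul_pos (hc0 k) (uniformDensity_pos hx))

lemma uniformMixture_inv (x : G) : uniformMixture c H x⁻¹ = uniformMixture c H x := by
  simp only [uniformMixture, uniformDensity_inv]

lemma hasSum_uniformMixture [∀ k, Finite (H k)] (hc0 : 0 ≤ c) (hc : HasSum c 1) :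
    HasSum (uniformMixture c H) 1 := by
  set f : ℕ → G → ℝ := fun k x => c k * uniformDensity (H k) x
  have hrow (k : ℕ) : HasSum (f k) (c k) := by
    simpa using hasSum_uniformDensity.mul_left (c k)
  have hrows : (fun k => ∑' x, f k x) = c := funext fun k => (hrow k).tsum_eq
  have hf : Summable (uncurry f) :=
    (summable_prod_of_nonneg fun _ => mul_nonneg (hc0 _) (uniformDensity_nonneg _)).2
      ⟨fun k => (hrow k).summable, (congrArg Summable hrows).mpr hc.summable⟩
  have hcol : Summable (uniformMixture c H) := hf.prod_symm.prod
  rw [hcol.hasSum_iff]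
  calc ∑' x, uniformMixture c H x = ∑' k, ∑' x, f k x :=
        hf.tsum_comm' (fun k => (hrow k).summable) (summable_mul_uniformDensity hc0 hc.summable)
    _ = 1 := by rw [hrows, hc.tsum_eq]

lemma sum_smul_uniformDensity_le_uniformMixture (hc0 : 0 ≤ c) (hc : Summable c) (k : ℕ) :
    ∑ j ∈ Finset.range (k + 1), c j • uniformDensity (H j) ≤ uniformMixture c H := fun x => by
  simp only [Finset.sum_apply, Pi.smul_apply, smul_eq_mul]
  exact (summable_mul_uniformDensity hc0 hc x).sum_le_tsum _
      fun j _ => mul_nonneg (hc0 j) (uniformDensity_nonneg x)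

lemma sum_pow_div_card_le_gconvPow_uniformMixture [∀ k, Finite (H k)] (hH : Monotone H)
    (hc0 : 0 ≤ c) (hc : HasSum c 1) (k n : ℕ) :
    (∑ j ∈ Finset.range (k + 1), c j) ^ n / Nat.card (H k) ≤ gconvPow (uniformMixture c H) n 1 :=
  (sum_pow_div_card_le_gconvPow hH hc0 k n).trans <|
    gconvPow_mono (Finset.sum_nonneg fun j _ => smul_nonneg (hc0 j) uniformDensity_nonneg)
      (sum_smul_uniformDensity_le_uniformMixture hc0 hc.summable k)
      (hasSum_uniformMixture hc0 hc).summable (hasSum_uniformMixture hc0 hc).tsum_eq.le n 1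

end Mixture

end

section Sequences

def weightsOfTails (t : ℕ → ℝ) : ℕ → ℝ
  | 0 => 1 - t 0
  | k + 1 => t k - t (k + 1)

lemma sum_range_succ_weightsOfTails (t : ℕ → ℝ) (k : ℕ) :
    ∑ j ∈ Finset.range (k + 1), weightsOfTails t j = 1 - t k := by
  induction k with
  | zero => simp [weightsOfTails]
  | succ k ih => rw [Finset.sum_range_succ, ih, weightsOfTails]; ring

lemma weightsOfTails_pos {t : ℕ → ℝ} (ht : StrictAnti t) (ht0 : t 0 < 1) :
    ∀ k, 0 < weightsOfTails t k
  | 0 => sub_pos.2 ht0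
  | k + 1 => sub_pos.2 (ht k.lt_succ_self)

lemma hasSum_weightsOfTails {t : ℕ → ℝ} (hpos : 0 ≤ weightsOfTails t)
    (ht : Tendsto t atTop (nhds 0)) : HasSum (weightsOfTails t) 1 := by
  rw [hasSum_iff_tendsto_nat_of_nonneg hpos, ← tendsto_add_atTop_iff_nat 1]
  simp only [sum_range_succ_weightsOfTails]
  simpa using (tendsto_const_nhds (x := (1 : ℝ))).sub ht

lemma exists_strictAnti_tendsto_zero_le {b : ℕ → ℝ} (hb : ∀ k, 0 < b k) :
    ∃ t : ℕ → ℝ, StrictAnti t ∧ (∀ k, 0 < t k) ∧ Tendsto t atTop (nhds 0) ∧ ∀ k, t k ≤ b k := by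
  let t : ℕ → ℝ := fun k => Nat.rec (b 0) (fun k tk => min (tk / 2) (b (k + 1))) k
  have hpos (k : ℕ) : 0 < t k := by
    induction k with
    | zero => exact hb 0
    | succ k ih => exact lt_min (half_pos ih) (hb (k + 1))
  have hhalf (k : ℕ) : t (k + 1) ≤ t k / 2 := min_le_left _ _
  have hgeom (k : ℕ) : t k ≤ b 0 * (1 / 2) ^ k := by
    induction k with
    | zero => simp [t]
    | succ k ih =>
      rw [pow_succ, ← mul_assoc]
      linarith [hhalf k]
  refine ⟨t, strictAnti_nat_of_succ_lt fun k => (hhalf k).trans_lt (half_lt_self (hpos k)), hpos,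
    squeeze_zero (fun k => (hpos k).le) hgeom ?_, fun k => ?_⟩
  · simpa using (tendsto_pow_atTop_nhds_zero_of_lt_one (by norm_num : (0 : ℝ) ≤ 1 / 2)
      (by norm_num)).const_mul (b 0)
  · cases k
    exacts [le_rfl, min_le_right _ _]

lemma exists_strictMono_forall_le {F : ℝ → ℝ} (hF : Tendsto F atTop atTop) (A : ℕ → ℝ) :
    ∃ q : ℕ → ℕ, StrictMono q ∧ ∀ k n, q k ≤ n → A k ≤ F n :=
  extraction_forall_of_eventually fun k => eventually_forall_ge_atTop.2 <|
    (hF.comp tendsto_natCast_atTop_atTop).eventually_ge_atTop (A k)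

lemma tendsto_zero_of_forall_Ico {g : ℕ → ℝ} {q : ℕ → ℕ} (hq : StrictMono q)
    (hg : ∀ k n, q k ≤ n → n < q (k + 1) → 0 ≤ g n ∧ g n ≤ 1 / (k + 1)) :
    Tendsto g atTop (nhds 0) := by
  have hloc (k n : ℕ) (hn : q k ≤ n) : ∃ j, k ≤ j ∧ q j ≤ n ∧ n < q (j + 1) := by
    obtain ⟨j, hj, hj'⟩ := hq.exists_between_of_tendsto_atTop hq.tendsto_atTop
      (x := n + 1) (Nat.lt_succ_of_le ((hq.monotone k.zero_le).trans hn))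
    exact ⟨j, Nat.lt_succ_iff.1 (hq.lt_iff_lt.1 (hn.trans_lt hj')), Nat.lt_succ_iff.1 hj, hj'⟩
  refine tendsto_order.2 ⟨fun a ha => ?_, fun a ha => ?_⟩
  · filter_upwards [eventually_ge_atTop (q 0)] with n hn
    obtain ⟨j, -, hj, hj'⟩ := hloc 0 n hn
    exact ha.trans_le (hg j n hj hj').1
  · obtain ⟨k, hk⟩ := exists_nat_one_div_lt ha
    filter_upwards [eventually_ge_atTop (q k)] with n hn
    obtain ⟨j, hkj, hj, hj'⟩ := hloc k n hn
    refine (hg j n hj hj').2.trans_lt (lt_of_le_of_lt ?_ hk)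
    gcongr

lemma neg_log_le_of_one_sub_pow_div_le {P t N : ℝ} {n : ℕ} (ht0 : 0 ≤ t) (ht : t ≤ 1 / 2)
    (hN : 0 < N) (hP : (1 - t) ^ n / N ≤ P) : -Real.log P ≤ 2 * n * t + Real.log N := by
  have h1t : 0 < 1 - t := by linarith
  have hlog : -Real.log (1 - t) ≤ 2 * t := by
    have hinv : (1 - t)⁻¹ ≤ 1 + 2 * t := by
      rw [inv_le_iff_one_le_mul₀ h1t]
      nlinarith
    linarith [Real.one_sub_inv_le_log_of_pos h1t]
  have hlogP := Real.log_le_log (by positivity) hP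
  rw [Real.log_div (by positivity) hN.ne', Real.log_pow] at hlogP
  nlinarith [mul_le_mul_of_nonneg_left hlog (Nat.cast_nonneg (α := ℝ) n)]

lemma neg_log_div_le_inv_succ {P t N F : ℝ} {n k : ℕ} (ht0 : 0 ≤ t) (ht : t ≤ 1 / 2)
    (hN : 1 ≤ N) (hP : (1 - t) ^ n / N ≤ P) (hP1 : P ≤ 1) (hnt : 2 * n * t ≤ Real.log N + 1)
    (hF : 2 * (k + 1) * (Real.log N + 1) ≤ F) :
    0 ≤ -Real.log P / F ∧ -Real.log P / F ≤ 1 / (k + 1) := by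
  have hlogN := Real.log_nonneg hN
  have hF0 : 0 < F := lt_of_lt_of_le (by positivity) hF
  have hP0 : 0 < P := lt_of_lt_of_le (div_pos (pow_pos (by linarith) n) (by linarith)) hP
  have hlogP := neg_log_le_of_one_sub_pow_div_le ht0 ht (by linarith) hP
  refine ⟨div_nonneg (neg_nonneg.2 (Real.log_nonpos hP0.le hP1)) hF0.le, ?_⟩
  rw [div_le_div_iff₀ hF0 (by positivity)]
  nlinarith

end Sequences

theorem stmt_9_general {G : Type*} [Group G]
    (H : ℕ → Subgroup G) (hfin : ∀ k, (H k : Set G).Finite)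
    (hlt : ∀ k, H k < H (k + 1)) (hunion : ∀ x : G, ∃ k, x ∈ H k)
    (F : ℝ → ℝ)
    (hFinf : Tendsto F atTop atTop) :
    ∃ μ : G → ℝ, (∀ x : G, 0 < μ x) ∧ (∑' x : G, μ x = 1) ∧
      (∀ x : G, μ x⁻¹ = μ x) ∧
      Tendsto (fun n : ℕ => -Real.log (gconvPow μ n (1 : G)) / F n)
        atTop (nhds 0) := by
  have hHfin : ∀ k, Finite (H k) := fun k => (hfin k).to_subtype
  have hH : Monotone H := monotone_nat_of_le_succ fun k => (hlt k).le
  set L : ℕ → ℝ := fun k => Real.log (Nat.card (H k)) + 1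
  obtain ⟨q, hq, hqF⟩ := exists_strictMono_forall_le hFinf fun k => 2 * (k + 1) * L k
  have hq0 (k : ℕ) : (0 : ℝ) < q (k + 1) := Nat.cast_pos.2 (pos_of_gt (hq k.lt_succ_self))
  obtain ⟨t, ht, ht0, htlim, htb⟩ := exists_strictAnti_tendsto_zero_le
    (b := fun k => min (1 / 2) (L k / (2 * q (k + 1)))) fun k => by have := hq0 k; positivity
  have hcpos := weightsOfTails_pos ht ((htb 0).trans_lt (by norm_num))
  have hc0 : 0 ≤ weightsOfTails t := fun k => (hcpos k).le
  have hc : HasSum (weightsOfTails t) 1 := hasSum_weightsOfTails hc0 htlim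
  set μ := uniformMixture (weightsOfTails t) H
  have hμ : HasSum μ 1 := hasSum_uniformMixture hc0 hc
  refine ⟨μ, fun x => (hunion x).elim fun k hk => uniformMixture_pos hcpos hc.summable hk,
    hμ.tsum_eq, uniformMixture_inv, tendsto_zero_of_forall_Ico hq fun k n hkn hnk => ?_⟩
  have hP := sum_pow_div_card_le_gconvPow_uniformMixture hH hc0 hc k n
  rw [sum_range_succ_weightsOfTails] at hP
  refine neg_log_div_le_inv_succ (ht0 k).le ((htb k).trans (min_le_left _ _))
    (Nat.one_le_cast.2 Nat.card_pos) hP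
    (gconvPow_le_one (uniformMixture_nonneg hc0) hμ.summable hμ.tsum_eq.le n 1) ?_ (hqF k n hkn)
  have := hq0 k
  calc 2 * n * t k ≤ 2 * q (k + 1) * (L k / (2 * q (k + 1))) := by
        gcongr
        exacts [(ht0 k).le, (htb k).trans (min_le_right _ _)]
    _ = L k := by field_simp

/-- Proposition 4.3: on an infinite countable locally finite group, for any
continuous nondecreasing `F : [0,∞) → [0,∞)` with `F(t) = o(t)` and
`F(t) → ∞`, there is a symmetric strictly positive probability density `μ`
with `-log(μ^{*n}(e))/F(n) → 0`. -/
theorem stmt_9 {G : Type*} [Group G] [Countable G]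
    (H : ℕ → Subgroup G) (hfin : ∀ k, (H k : Set G).Finite)
    (hlt : ∀ k, H k < H (k + 1)) (hunion : ∀ x : G, ∃ k, x ∈ H k)
    (F : ℝ → ℝ) (hF0 : ∀ t ≥ (0 : ℝ), 0 ≤ F t)
    (hFcont : ContinuousOn F (Set.Ici 0))
    (hFmono : MonotoneOn F (Set.Ici 0))
    (hFsub : Tendsto (fun t => F t / t) atTop (nhds 0))
    (hFinf : Tendsto F atTop atTop) :
    ∃ μ : G → ℝ, (∀ x : G, 0 < μ x) ∧ (∑' x : G, μ x = 1) ∧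
      (∀ x : G, μ x⁻¹ = μ x) ∧
      Tendsto (fun n : ℕ => -Real.log (gconvPow μ n (1 : G)) / F n)
        atTop (nhds 0) :=
  stmt_9_general H hfin hlt hunion F hFinf
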